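/- arXiv:0804.0429 — 6 statements merged into one kernel-verified Lean document; each statement's English description precedes it below -/
import Mathlib

section
/- Let R be a ring, M a left R-module, φ an R-endomorphism of M, and suppose {x_{γ,i}} is a nilpotent Jordan normal base of M with respect to φ. Then the kernel of φ equals the direct sum ⊕_{γ∈Γ} R·x_{γ,k_γ} of the submodules generated by the last element of each block. -/
open Polynomial

/-- A nilpotent Jordan normal base of the left `R`-module `M` with respect to the
endomorphism `φ`: a family `x γ i` (`γ ∈ Γ`, `0 ≤ i < k γ`, 0-based indexing) such that
each `R • x γ i` is a simple submodule, `M` is the internal direct sum of these submodules,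
`φ` shifts within each block (annihilating the last element, i.e. `x γ i = 0` for `i ≥ k γ`),
and the block sizes `k γ` are bounded. -/
structure IsNilpotentJordanBase {R : Type*} [Ring R] {M : Type*} [AddCommGroup M] [Module R M]
    (φ : Module.End R M) {Γ : Type*} (k : Γ → ℕ) (x : Γ → ℕ → M) : Prop where
  k_pos : ∀ γ, 1 ≤ k γ
  simple : ∀ γ, ∀ i < k γ, IsSimpleModule R ↥(Submodule.span R {x γ i})
  indep : iSupIndep fun p : Σ γ : Γ, Fin (k γ) => Submodule.span R {x p.1 p.2.val}
  spans : (⨆ p : Σ γ : Γ, Fin (k γ), Submodule.span R {x p.1 p.2.val}) = ⊤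
  step : ∀ γ i, φ (x γ i) = x γ (i + 1)
  zero_after : ∀ γ i, k γ ≤ i → x γ i = 0
  bounded : ∃ n, ∀ γ, k γ ≤ n

/-
On a summand `R ∙ x γ i` that is not the last of its block, `φ` is injective: the summand is
simple and its image `R ∙ x γ (i + 1)` is nonzero. Distinct such summands land in distinct
summands of an independent family, so `φ` is injective on the sum of all non-last summands.
The last summands lie in `ker φ` and together with the others span `M`, so the modular law gives
`ker φ = ⨆ γ, R ∙ x γ (k γ - 1)`.
-/

open Function LinearMap Submodule

theorem iSupIndep.disjoint_iSup_ker_of_map_le {R M M' ι κ : Type*} [Ring R]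
    [AddCommGroup M] [Module R M] [AddCommGroup M'] [Module R M']
    {N' : κ → Submodule R M'} (hN' : iSupIndep N')
    {N : ι → Submodule R M} (f : M →ₗ[R] M') {σ : ι → κ} (hσ : Injective σ)
    (hmaps : ∀ i, (N i).map f ≤ N' (σ i)) (hinj : ∀ i, Disjoint (N i) (ker f)) :
    Disjoint (⨆ i, N i) (ker f) := by
  classical
  rw [disjoint_def]
  intro v hv hfv
  obtain ⟨g, rfl⟩ := (mem_iSup_iff_exists_dfinsupp N v).mp hv
  let fg : Π₀ i, N' (σ i) := g.mapRange
    (fun i (y : N i) => ⟨f y, hmaps i (mem_map_of_mem y.2)⟩) fun _ => by simp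
  have hfg : fg = 0 := (hN'.comp hσ).dfinsupp_lsum_injective <| by
    rw [map_zero, ← hfv]
    simp [fg, DFinsupp.sumAddHom_apply, DFinsupp.sum_mapRange_index, map_dfinsuppSum]
  have hg : g = 0 := by
    ext i
    have : f (g i) = 0 := congrArg Subtype.val (DFinsupp.ext_iff.mp hfg i)
    exact disjoint_def.mp (hinj i) _ (g i).2 this
  simp [hg]

theorem Submodule.disjoint_span_singleton_ker_of_isSimpleModule {R M M' : Type*} [Ring R]
    [AddCommGroup M] [Module R M] [AddCommGroup M'] [Module R M'] {x : M}
    (hx : IsSimpleModule R (span R {x})) (f : M →ₗ[R] M') (hfx : f x ≠ 0) :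
    Disjoint (span R {x}) (ker f) := by
  rwa [← (isSimpleModule_iff_isAtom.mp hx).not_le_iff_disjoint, span_singleton_le_iff_mem]

namespace IsNilpotentJordanBase

variable {R M Γ : Type*} [Ring R] [AddCommGroup M] [Module R M] {φ : Module.End R M}
  {k : Γ → ℕ} {x : Γ → ℕ → M}

theorem ne_zero (h : IsNilpotentJordanBase φ k x) {γ : Γ} {i : ℕ} (hi : i < k γ) :
    x γ i ≠ 0 := fun hx =>
  (isSimpleModule_iff_isAtom.mp (h.simple γ i hi)).ne_bot (span_singleton_eq_bot.mpr hx)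

theorem map_span (h : IsNilpotentJordanBase φ k x) (γ : Γ) (i : ℕ) :
    (span R {x γ i}).map φ = span R {x γ (i + 1)} := by
  rw [Submodule.map_span, Set.image_singleton, h.step]

theorem last_mem_ker (h : IsNilpotentJordanBase φ k x) (γ : Γ) : x γ (k γ - 1) ∈ ker φ := by
  rw [mem_ker, h.step]
  exact h.zero_after γ _ (by omega)

theorem disjoint_span_ker (h : IsNilpotentJordanBase φ k x) {γ : Γ} {i : ℕ}
    (hi : i + 1 < k γ) : Disjoint (span R {x γ i}) (ker φ) :=
  disjoint_span_singleton_ker_of_isSimpleModule (h.simple γ i (by omega)) φ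
    (h.step γ i ▸ h.ne_zero hi)

theorem iSup_last_sup_iSup_nonLast (h : IsNilpotentJordanBase φ k x) :
    (⨆ γ, span R {x γ (k γ - 1)}) ⊔
      (⨆ p : {p : Σ γ, Fin (k γ) // p.2.val + 1 < k p.1}, span R {x p.1.1 p.1.2}) = ⊤ := by
  refine eq_top_iff.mpr (h.spans ▸ iSup_le fun p => ?_)
  by_cases hp : p.2.val + 1 < k p.1
  · exact le_sup_of_le_right (le_iSup_of_le ⟨p, hp⟩ le_rfl)
  · rw [show p.2.val = k p.1 - 1 by omega]
    exact le_sup_of_le_left (le_iSup_of_le p.1 le_rfl)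

theorem disjoint_iSup_nonLast_ker (h : IsNilpotentJordanBase φ k x) :
    Disjoint (⨆ p : {p : Σ γ, Fin (k γ) // p.2.val + 1 < k p.1}, span R {x p.1.1 p.1.2})
      (ker φ) := by
  refine h.indep.disjoint_iSup_ker_of_map_le φ (σ := fun p => ⟨p.1.1, p.1.2.val + 1, p.2⟩) ?_
    (fun p => (h.map_span _ _).le) (fun p => h.disjoint_span_ker p.2)
  rintro ⟨⟨γ, i⟩, hi⟩ ⟨⟨γ', i'⟩, hi'⟩ hpp
  simp only [Sigma.mk.injEq] at hpp
  obtain ⟨rfl, hii'⟩ := hpp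
  simp_all [Fin.ext_iff]

theorem iSupIndep_last (h : IsNilpotentJordanBase φ k x) :
    iSupIndep fun γ => span R {x γ (k γ - 1)} :=
  (h.indep.comp
    (f := fun γ => (⟨γ, k γ - 1, by have := h.k_pos γ; omega⟩ : Σ γ, Fin (k γ)))
    fun _ _ hγ => congrArg Sigma.fst hγ :)

theorem iSup_last_le_ker (h : IsNilpotentJordanBase φ k x) :
    ⨆ γ, span R {x γ (k γ - 1)} ≤ ker φ :=
  iSup_le fun γ => (span_singleton_le_iff_mem _ _).mpr (h.last_mem_ker γ)

theorem ker_eq_iSup_last (h : IsNilpotentJordanBase φ k x) :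
    ker φ = ⨆ γ, span R {x γ (k γ - 1)} := by
  rw [← top_inf_eq (ker φ), ← h.iSup_last_sup_iSup_nonLast,
    sup_inf_assoc_of_le _ h.iSup_last_le_ker, h.disjoint_iSup_nonLast_ker.eq_bot, sup_bot_eq]

end IsNilpotentJordanBase

/-- The kernel of `φ` is the direct sum `⊕_{γ∈Γ} R·x_{γ,k_γ}` of the submodules generated by
the last element of each block (0-based: `x γ (k γ - 1)`). -/
theorem stmt_1 {R : Type*} [Ring R] {M : Type*} [AddCommGroup M] [Module R M]
    (φ : Module.End R M) {Γ : Type*} (k : Γ → ℕ) (x : Γ → ℕ → M)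
    (h : IsNilpotentJordanBase φ k x) :
    LinearMap.ker φ = (⨆ γ : Γ, Submodule.span R {x γ (k γ - 1)}) ∧
      iSupIndep fun γ : Γ => Submodule.span R {x γ (k γ - 1)} :=
  ⟨h.ker_eq_iSup_last, h.iSupIndep_last⟩
end

section
/- Let φ be a nilpotent R-endomorphism of a finitely generated semisimple left R-module M. If {x_{γ,i} | γ∈Γ, 1≤i≤k_γ} and {y_{δ,j} | δ∈Δ, 1≤j≤l_δ} are two nilpotent Jordan normal bases of M with respect to φ, then there is a bijection π: Γ → Δ with k_γ = l_{π(γ)} for all γ; i.e., the multiset of block sizes is uniquely determined. -/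
/-! Applying `φ ^ m` to a Jordan base kills the first `m` vectors of every block and shifts the
others, so the image of `φ ^ m` is the direct sum of the simple modules `R x_{γ,i}` with `i ≥ m`,
and its length is the number of such pairs `(γ, i)`. These lengths depend on `φ` alone; their
successive differences count the blocks of size `> m`, which determines the block sizes up to a
bijection. -/

open Polynomial

section BlockCounting

variable {α β : Type*}

theorem Nat.card_subtype_le_eq_add [Finite α] (f : α → ℕ) (m : ℕ) :
    Nat.card {a // m ≤ f a} = Nat.card {a // m + 1 ≤ f a} + Nat.card {a // f a = m} := by
  rw [← Nat.card_sum]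
  refine Nat.card_congr ((Equiv.subtypeEquivRight fun a => ?_).trans (subtypeOrEquiv _ _ ?_))
  · show m ≤ f a ↔ m + 1 ≤ f a ∨ f a = m
    omega
  · simp only [Pi.disjoint_iff, Prop.disjoint_iff]
    omega

theorem Nat.card_fiber_eq_of_card_le_eq [Finite α] [Finite β] {f : α → ℕ} {g : β → ℕ}
    (h : ∀ m, Nat.card {a // m ≤ f a} = Nat.card {b // m ≤ g b}) (m : ℕ) :
    Nat.card {a // f a = m} = Nat.card {b // g b = m} := by
  have hf := Nat.card_subtype_le_eq_add f m
  have hg := Nat.card_subtype_le_eq_add g m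
  rw [h m, h (m + 1)] at hf
  omega

theorem exists_equiv_of_card_le_eq [Finite α] [Finite β] {f : α → ℕ} {g : β → ℕ}
    (h : ∀ m, Nat.card {a // m ≤ f a} = Nat.card {b // m ≤ g b}) :
    ∃ e : α ≃ β, ∀ a, f a = g (e a) :=
  let e m := (Finite.card_eq.mp (Nat.card_fiber_eq_of_card_le_eq h m)).some
  ⟨Equiv.ofFiberEquiv e, fun a => (Equiv.ofFiberEquiv_map e a).symm⟩

/-- With all blocks nonempty this also holds for `m = 0`, where `m - 1` truncates to `0`. -/
theorem Nat.card_le_eq_card_sigma_snd_eq {Γ : Type*} {k : Γ → ℕ} (hk : ∀ γ, 1 ≤ k γ) (m : ℕ) :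
    Nat.card {γ // m ≤ k γ} = Nat.card {p : Σ γ, Fin (k γ) // (p.2 : ℕ) = m - 1} :=
  Nat.card_congr
    { toFun := fun γ => ⟨⟨γ.1, m - 1, by have := hk γ.1; have := γ.2; omega⟩, rfl⟩
      invFun := fun p => ⟨p.1.1, by have := p.1.2.2; have := p.2; omega⟩
      left_inv := fun _ => rfl
      right_inv := by
        rintro ⟨⟨γ, i, hi⟩, h : i = m - 1⟩
        subst h
        rfl }

end BlockCounting

theorem Submodule.length_iSup_of_iSupIndep {R M ι : Type*} [Ring R] [AddCommGroup M]
    [Module R M] [Finite ι] {S : ι → Submodule R M} (hS : iSupIndep S)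
    (hsimple : ∀ i, IsSimpleModule R (S i)) :
    Module.length R ↥(⨆ i, S i) = Nat.card ι := by
  classical
  cases nonempty_fintype ι
  let e : (Π i, S i) ≃ₗ[R] ↥(⨆ i, S i) :=
    (DFinsupp.linearEquivFunOnFintype (R := R)).symm ≪≫ₗ
      LinearEquiv.ofInjective _ hS.dfinsupp_lsum_injective ≪≫ₗ
      LinearEquiv.ofEq _ _ (Submodule.iSup_eq_range_dfinsupp_lsum S).symm
  simp [← e.length_eq, Module.length_eq_one, Nat.card_eq_fintype_card]

namespace IsNilpotentJordanBase

variable {R M Γ : Type*} [Ring R] [AddCommGroup M] [Module R M] {φ : Module.End R M}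
  {k : Γ → ℕ} {x : Γ → ℕ → M}

theorem pow_apply (hx : IsNilpotentJordanBase φ k x) (m : ℕ) (γ : Γ) (i : ℕ) :
    (φ ^ m) (x γ i) = x γ (i + m) := by
  induction m with
  | zero => simp
  | succ m ih => rw [pow_succ', Module.End.mul_apply, ih, hx.step, Nat.add_assoc]

theorem range_pow (hx : IsNilpotentJordanBase φ k x) (m : ℕ) :
    LinearMap.range (φ ^ m) =
      ⨆ q : {p : Σ γ, Fin (k γ) // m ≤ (p.2 : ℕ)}, Submodule.span R {x q.1.1 q.1.2} := by
  have hmap : ∀ γ i, (Submodule.span R {x γ i}).map (φ ^ m) = Submodule.span R {x γ (i + m)} :=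
    fun γ i => by rw [Submodule.map_span, Set.image_singleton, hx.pow_apply]
  rw [LinearMap.range_eq_map, ← hx.spans, Submodule.map_iSup]
  apply le_antisymm
  · refine iSup_le fun ⟨γ, i⟩ => ?_
    rw [hmap]
    by_cases hi : i + m < k γ
    · exact le_iSup_of_le ⟨⟨γ, i + m, hi⟩, Nat.le_add_left m i⟩ le_rfl
    · simp [hx.zero_after γ _ (not_lt.mp hi)]
  · refine iSup_le fun ⟨⟨γ, i⟩, hm⟩ => le_iSup_of_le ⟨γ, i - m, by omega⟩ ?_
    rw [hmap, Nat.sub_add_cancel hm]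

theorem isSimpleModule_span (hx : IsNilpotentJordanBase φ k x) (p : Σ γ, Fin (k γ)) :
    IsSimpleModule R (Submodule.span R {x p.1 p.2}) :=
  hx.simple p.1 p.2 p.2.2

theorem finite_sigma [IsNoetherian R M] (hx : IsNilpotentJordanBase φ k x) :
    Finite (Σ γ, Fin (k γ)) :=
  WellFoundedGT.finite_of_iSupIndep hx.indep fun p =>
    (isSimpleModule_iff_isAtom.mp (hx.isSimpleModule_span p)).1

theorem finite_index [IsNoetherian R M] (hx : IsNilpotentJordanBase φ k x) : Finite Γ :=
  have := hx.finite_sigma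
  Finite.of_injective (fun γ => (⟨γ, 0, hx.k_pos γ⟩ : Σ γ, Fin (k γ)))
    fun _ _ h => congrArg Sigma.fst h

theorem length_range_pow [IsNoetherian R M] (hx : IsNilpotentJordanBase φ k x) (m : ℕ) :
    Module.length R (LinearMap.range (φ ^ m)) =
      Nat.card {p : Σ γ, Fin (k γ) // m ≤ (p.2 : ℕ)} := by
  have := hx.finite_sigma
  rw [hx.range_pow]
  exact Submodule.length_iSup_of_iSupIndep (hx.indep.comp Subtype.val_injective)
    fun q => hx.isSimpleModule_span q.1

end IsNilpotentJordanBase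

theorem stmt_3_general {R : Type*} [Ring R] {M : Type*} [AddCommGroup M] [Module R M]
    [Module.Finite R M] [IsSemisimpleModule R M]
    (φ : Module.End R M)
    {Γ : Type*} (k : Γ → ℕ) (x : Γ → ℕ → M) (hx : IsNilpotentJordanBase φ k x)
    {Δ : Type*} (l : Δ → ℕ) (y : Δ → ℕ → M) (hy : IsNilpotentJordanBase φ l y) :
    ∃ π : Γ ≃ Δ, ∀ γ, k γ = l (π γ) := by
  have := hx.finite_sigma
  have := hy.finite_sigma
  have := hx.finite_index
  have := hy.finite_index
  have hrank : ∀ m, Nat.card {p : Σ γ, Fin (k γ) // m ≤ (p.2 : ℕ)} =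
      Nat.card {q : Σ δ, Fin (l δ) // m ≤ (q.2 : ℕ)} := fun m => by
    exact_mod_cast (hx.length_range_pow m).symm.trans (hy.length_range_pow m)
  refine exists_equiv_of_card_le_eq fun m => ?_
  rw [Nat.card_le_eq_card_sigma_snd_eq hx.k_pos, Nat.card_le_eq_card_sigma_snd_eq hy.k_pos]
  exact Nat.card_fiber_eq_of_card_le_eq hrank (m - 1)

/-- Uniqueness of block sizes: if `{x_{γ,i}}` and `{y_{δ,j}}` are two nilpotent Jordan normal
bases of the finitely generated semisimple module `M` with respect to the nilpotent
endomorphism `φ`, then there is a bijection `π : Γ → Δ` with `k γ = l (π γ)` for all `γ`. -/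
theorem stmt_3 {R : Type*} [Ring R] {M : Type*} [AddCommGroup M] [Module R M]
    [Module.Finite R M] [IsSemisimpleModule R M]
    (φ : Module.End R M) (hφ : IsNilpotent φ)
    {Γ : Type*} (k : Γ → ℕ) (x : Γ → ℕ → M) (hx : IsNilpotentJordanBase φ k x)
    {Δ : Type*} (l : Δ → ℕ) (y : Δ → ℕ → M) (hy : IsNilpotentJordanBase φ l y) :
    ∃ π : Γ ≃ Δ, ∀ γ, k γ = l (π γ) :=
  stmt_3_general φ k x hx l y hy
end

section
/- Let φ be a nonzero nilpotent R-endomorphism of a semisimple left R-module M. Then there exists a nilpotent Jordan normal base of M with respect to φ consisting of a single block if and only if M is finitely generated of composition length d and φ^{d-1} ≠ 0. -/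
/-!
Write `t` for the nilpotency class of `φ`. If `R ∙ m` is simple and meets `ker φ^(t-1)`
trivially (such `m` exist since `M` is semisimple and `φ^(t-1) ≠ 0`), then the `R ∙ φ^i m`
for `i < t` are `t` independent simple submodules: `φ^(t-1-i)` is injective on `R ∙ φ^i m`
and kills every later term. Their sum has length `t ≥ d`, so it is all of `M`; this is the
single block. Conversely a single block of size `n` is a direct sum of `n` simple modules,
so `d = n`, and `φ^(n-1)` maps the first vector of the block to the last, nonzero one.
-/

open Polynomial

theorem iSupIndep_of_disjoint_iSup_gt {α : Type*} [CompleteLattice α] [IsModularLattice α] :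
    ∀ {n : ℕ} {f : Fin n → α}, (∀ i, Disjoint (f i) (⨆ j > i, f j)) → iSupIndep f
  | 0, f, _ => iSupIndep_subsingleton f
  | n + 1, f, h => by
    have tail : iSupIndep fun i : Fin n => f i.succ :=
      iSupIndep_of_disjoint_iSup_gt fun i => (h i.succ).mono_right <|
        iSup₂_le fun j hj => le_iSup₂_of_le j.succ (Fin.succ_lt_succ_iff.mpr hj) le_rfl
    have head : Disjoint (f 0) (⨆ i : Fin n, f i.succ) :=
      (h 0).mono_right <| iSup_le fun j => le_iSup₂_of_le j.succ (Fin.succ_pos j) le_rfl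
    rw [iSupIndep_iff_supIndep_univ] at tail ⊢
    rw [Fin.univ_succ, Finset.cons_eq_insert]
    refine Finset.SupIndep.insert ?_ ?_
    · rwa [Finset.supIndep_map]
    · rwa [Finset.sup_map, Finset.sup_univ_eq_iSup]

theorem IsNilpotent.exists_pow_succ_eq_zero_of_pow_ne_zero {A : Type*} [MonoidWithZero A]
    {a : A} (ha : IsNilpotent a) {k : ℕ} (hk : a ^ k ≠ 0) :
    ∃ n, k ≤ n ∧ a ^ (n + 1) = 0 ∧ a ^ n ≠ 0 := by
  have hk' : k < nilpotencyClass a := by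
    by_contra! h
    exact hk (pow_eq_zero_of_le h (pow_nilpotencyClass ha))
  obtain ⟨n, hn⟩ := Nat.exists_eq_add_one_of_ne_zero (by omega : nilpotencyClass a ≠ 0)
  exact ⟨n, by omega, nilpotencyClass_eq_succ_iff.mp hn⟩

section

variable {R : Type*} [Ring R] {M N : Type*} [AddCommGroup M] [Module R M] [AddCommGroup N]
  [Module R N]

theorem isSimpleModule_map_of_disjoint_ker {S : Submodule R M} [IsSimpleModule R S]
    {f : M →ₗ[R] N} (h : Disjoint S (LinearMap.ker f)) : IsSimpleModule R (S.map f) := by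
  have hinj : Function.Injective (f.domRestrict S) := by
    rw [← LinearMap.ker_eq_bot, LinearMap.ker_domRestrict, ← Submodule.disjoint_iff_comap_eq_bot]
    exact h
  rw [← LinearMap.range_domRestrict]
  exact IsSimpleModule.congr (LinearEquiv.ofInjective _ hinj).symm

theorem length_iSup_eq_card_of_iSupIndep {ι : Type*} [Fintype ι] {p : ι → Submodule R M}
    (hp : ∀ i, IsSimpleModule R (p i)) (hind : iSupIndep p) :
    Module.length R ↥(⨆ i, p i) = Fintype.card ι := by
  classical
  let e : (Π₀ i, p i) ≃ₗ[R] ↥(⨆ i, p i) :=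
    (LinearEquiv.ofInjective _ hind.dfinsupp_lsum_injective).trans
      (LinearEquiv.ofEq _ _ (Submodule.iSup_eq_range_dfinsupp_lsum p).symm)
  rw [← e.length_eq, DFinsupp.linearEquivFunOnFintype.length_eq, Module.length_pi_of_fintype]
  simp [Module.length_eq_one]

theorem IsSemisimpleModule.exists_isSimpleModule_span_disjoint [IsSemisimpleModule R M]
    {N : Submodule R M} (hN : N ≠ ⊤) :
    ∃ m : M, IsSimpleModule R (R ∙ m) ∧ Disjoint (R ∙ m) N := by
  obtain ⟨S, hS, hSN⟩ : ∃ S : Submodule R M, IsSimpleModule R S ∧ ¬ S ≤ N := by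
    by_contra! h
    exact hN <| eq_top_iff.mpr <| sSup_simples_eq_top (R := R) (M := M) ▸ sSup_le h
  obtain ⟨m, hmS, hmN⟩ := Set.not_subset.mp hSN
  have hS' : IsAtom S := isSimpleModule_iff_isAtom.mp hS
  obtain rfl : R ∙ m = S :=
    (hS'.le_iff.mp ((Submodule.span_singleton_le_iff_mem _ _).mpr hmS)).resolve_left
      fun h => hmN (Submodule.span_singleton_eq_bot.mp h ▸ N.zero_mem)
  exact ⟨m, hS, hS'.not_le_iff_disjoint.mp hSN⟩

theorem Submodule.disjoint_map_of_disjoint_comap {S : Submodule R M} {K : Submodule R N}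
    {f : M →ₗ[R] N} (h : Disjoint S (K.comap f)) : Disjoint (S.map f) K := by
  rw [disjoint_iff, Submodule.map_inf_eq_map_inf_comap, h.eq_bot, Submodule.map_bot]

section JordanChain

variable {φ : Module.End R M} {m : M} {n : ℕ}

theorem span_pow_apply_eq_map (i : ℕ) : R ∙ (φ ^ i) m = (R ∙ m).map (φ ^ i) := by
  rw [Submodule.map_span, Set.image_singleton]

theorem disjoint_span_pow_apply_ker_pow (hm : Disjoint (R ∙ m) (LinearMap.ker (φ ^ n)))
    {i j : ℕ} (hij : i + j ≤ n) : Disjoint (R ∙ (φ ^ i) m) (LinearMap.ker (φ ^ j)) := by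
  rw [span_pow_apply_eq_map]
  refine Submodule.disjoint_map_of_disjoint_comap (hm.mono_right fun x hx => ?_)
  rw [Submodule.mem_comap, LinearMap.mem_ker, ← Module.End.mul_apply, ← pow_add] at hx
  exact Module.End.pow_map_zero_of_le (by omega) hx

theorem isSimpleModule_span_pow_apply [IsSimpleModule R (R ∙ m)]
    (hm : Disjoint (R ∙ m) (LinearMap.ker (φ ^ n))) {i : ℕ} (hi : i ≤ n) :
    IsSimpleModule R (R ∙ (φ ^ i) m) := by
  rw [span_pow_apply_eq_map]
  exact isSimpleModule_map_of_disjoint_ker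
    (hm.mono_right fun x hx => Module.End.pow_map_zero_of_le hi hx)

theorem iSupIndep_span_pow_apply (hm : Disjoint (R ∙ m) (LinearMap.ker (φ ^ n)))
    (hφm : (φ ^ (n + 1)) m = 0) : iSupIndep fun i : Fin (n + 1) => R ∙ (φ ^ (i : ℕ)) m := by
  refine iSupIndep_of_disjoint_iSup_gt fun i =>
    (disjoint_span_pow_apply_ker_pow hm (j := n - i) (by omega)).mono_right ?_
  refine iSup₂_le fun j hj => (Submodule.span_singleton_le_iff_mem _ _).mpr ?_
  rw [LinearMap.mem_ker, ← Module.End.mul_apply, ← pow_add]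
  exact Module.End.pow_map_zero_of_le (by omega) hφm

end JordanChain

theorem exists_isNilpotentJordanBase_unit_iff {φ : Module.End R M} :
    (∃ (n : ℕ) (x : ℕ → M), IsNilpotentJordanBase φ (fun _ : Unit => n) (fun _ => x)) ↔
      ∃ (n : ℕ) (m : M), (φ ^ (n + 1)) m = 0 ∧ (∀ i ≤ n, IsSimpleModule R (R ∙ (φ ^ i) m)) ∧
        iSupIndep (fun i : Fin (n + 1) => R ∙ (φ ^ (i : ℕ)) m) ∧
        ⨆ i : Fin (n + 1), R ∙ (φ ^ (i : ℕ)) m = ⊤ := by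
  constructor
  · rintro ⟨k, x, hx⟩
    obtain ⟨n, rfl⟩ := Nat.exists_eq_add_of_le' (hx.k_pos ())
    have hxi : x = fun i => (φ ^ i) (x 0) := by
      funext i
      induction i with
      | zero => rfl
      | succ i ih => rw [← hx.step () i, ih, pow_succ', Module.End.mul_apply]
    generalize x 0 = m at hxi
    subst hxi
    have hind : iSupIndep fun i : Fin (n + 1) => R ∙ (φ ^ (i : ℕ)) m :=
      hx.indep.comp (f := fun i : Fin (n + 1) => (⟨(), i⟩ : Σ _ : Unit, Fin (n + 1)))
        fun _ _ h => eq_of_heq (Sigma.mk.inj_iff.mp h).2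
    exact ⟨n, m, hx.zero_after () _ le_rfl, fun i hi => hx.simple () i (by omega), hind,
      by simpa only [iSup_sigma, iSup_unique] using hx.spans⟩
  · rintro ⟨n, m, hφm, hsimple, hind, htop⟩
    refine ⟨n + 1, fun i => (φ ^ i) m, fun _ => le_add_self, fun _ i hi => hsimple i (by omega),
      hind.comp (Equiv.uniqueSigma fun _ : Unit => Fin (n + 1)).injective, ?_, fun _ i => ?_,
      fun _ i hi => Module.End.pow_map_zero_of_le hi hφm, n + 1, fun _ => le_rfl⟩
    · simpa only [iSup_sigma, iSup_unique] using htop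
    · rw [pow_succ', Module.End.mul_apply]

theorem finite_and_exists_compositionSeries_length_eq_card {ι : Type*} [Fintype ι]
    {p : ι → Submodule R M} (hp : ∀ i, IsSimpleModule R (p i)) (hind : iSupIndep p)
    (htop : ⨆ i, p i = ⊤) :
    Module.Finite R M ∧ ∃ s : CompositionSeries (Submodule R M),
      s.head = ⊥ ∧ s.last = ⊤ ∧ s.length = Fintype.card ι := by
  have hlen : Module.length R M = Fintype.card ι := by
    rw [← Module.length_top, ← htop, length_iSup_eq_card_of_iSupIndep hp hind]
  have hfin : IsFiniteLength R M := Module.length_ne_top_iff.mp (by simp [hlen])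
  have := (isFiniteLength_iff_isNoetherian_isArtinian.mp hfin).1
  obtain ⟨s, hs₀, hs₁⟩ := isFiniteLength_iff_exists_compositionSeries.mp hfin
  exact ⟨inferInstance, s, hs₀, hs₁,
    by exact_mod_cast (Module.length_compositionSeries s hs₀ hs₁).trans hlen⟩

theorem iSup_eq_top_of_length_le_card [IsArtinian R M] [IsNoetherian R M] {ι : Type*}
    [Fintype ι] {p : ι → Submodule R M} (hp : ∀ i, IsSimpleModule R (p i)) (hind : iSupIndep p)
    (h : Module.length R M ≤ Fintype.card ι) : ⨆ i, p i = ⊤ := by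
  by_contra hne
  have hlt := Submodule.length_lt hne
  rw [length_iSup_eq_card_of_iSupIndep hp hind] at hlt
  exact hlt.not_ge h

end

theorem stmt_4_general {R : Type*} [Ring R] {M : Type*} [AddCommGroup M] [Module R M]
    [IsSemisimpleModule R M] (φ : Module.End R M) (hφ : IsNilpotent φ) :
    (∃ (n : ℕ) (x : ℕ → M), IsNilpotentJordanBase φ (fun _ : Unit => n) (fun _ => x)) ↔
      (Module.Finite R M ∧ ∃ s : CompositionSeries (Submodule R M),
        s.head = ⊥ ∧ s.last = ⊤ ∧ φ ^ (s.length - 1) ≠ 0) := by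
  rw [exists_isNilpotentJordanBase_unit_iff]
  constructor
  · rintro ⟨n, m, -, hsimple, hind, htop⟩
    obtain ⟨hfin, s, hs₀, hs₁, hsn⟩ := finite_and_exists_compositionSeries_length_eq_card
      (fun i : Fin (n + 1) => hsimple i i.is_le) hind htop
    refine ⟨hfin, s, hs₀, hs₁, ?_⟩
    rw [hsn, Fintype.card_fin, Nat.add_sub_cancel]
    have hne : R ∙ (φ ^ n) m ≠ ⊥ := (isSimpleModule_iff_isAtom.mp (hsimple n le_rfl)).1
    exact fun h => hne (by rw [h, LinearMap.zero_apply, Submodule.span_zero_singleton])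
  · rintro ⟨-, s, hs₀, hs₁, hs⟩
    obtain ⟨_, _⟩ := isFiniteLength_iff_isNoetherian_isArtinian.mp
      (isFiniteLength_of_exists_compositionSeries ⟨s, hs₀, hs₁⟩)
    obtain ⟨n, hsn, hφn, hφn'⟩ := hφ.exists_pow_succ_eq_zero_of_pow_ne_zero hs
    obtain ⟨m, hm, hmker⟩ :=
      IsSemisimpleModule.exists_isSimpleModule_span_disjoint (mt LinearMap.ker_eq_top.mp hφn')
    have hφm : (φ ^ (n + 1)) m = 0 := by rw [hφn, LinearMap.zero_apply]
    have hsimple := fun i (hi : i ≤ n) => isSimpleModule_span_pow_apply hmker hi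
    have hind := iSupIndep_span_pow_apply hmker hφm
    refine ⟨n, m, hφm, hsimple, hind, iSup_eq_top_of_length_le_card
      (fun i : Fin (n + 1) => hsimple i i.is_le) hind ?_⟩
    rw [← Module.length_compositionSeries s hs₀ hs₁, Fintype.card_fin]
    exact_mod_cast (by omega : s.length ≤ n + 1)

/-- For a nonzero nilpotent endomorphism `φ` of a semisimple module `M`: there is a nilpotent
Jordan normal base of `M` with respect to `φ` consisting of a single block iff `M` is finitely
generated of composition length `d` and `φ^(d-1) ≠ 0`. -/
theorem stmt_4 {R : Type*} [Ring R] {M : Type*} [AddCommGroup M] [Module R M]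
    [IsSemisimpleModule R M] (φ : Module.End R M) (hφ0 : φ ≠ 0) (hφ : IsNilpotent φ) :
    (∃ (n : ℕ) (x : ℕ → M), IsNilpotentJordanBase φ (fun _ : Unit => n) (fun _ => x)) ↔
      (Module.Finite R M ∧ ∃ s : CompositionSeries (Submodule R M),
        s.head = ⊥ ∧ s.last = ⊤ ∧ φ ^ (s.length - 1) ≠ 0) :=
  stmt_4_general φ hφ
end

section
/- Let φ be a nonzero nilpotent R-endomorphism of a semisimple left R-module M. Then M admits a nilpotent Jordan normal base with respect to φ consisting of one block if and only if φ is an indecomposable nilpotent element of the endomorphism ring Hom_R(M,M), i.e., there is no idempotent e ∈ Hom_R(M,M) with 0 ≠ e ≠ 1 and e∘φ = φ∘e. -/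
open Polynomial

/-!
If `x₀, …, xₙ₋₁` is a one-block base, then `ker φ = R xₙ₋₁` is simple. An idempotent `e ≠ 0, 1`
commuting with `φ` splits `M` into the two nonzero `φ`-stable summands `range e` and `ker e`; since
`φ` is nilpotent each of them meets `ker φ` nontrivially, so both contain the atom `ker φ`, which
is absurd.

Conversely, let `m` be the nilpotency index of `φ` and pick a simple submodule `T = R s` with
`φ^(m-1) s ≠ 0`. Then `φ^(m-1)` is injective on `T`, and applying `φ^(m-1-i)` to a relation
`∑ yⱼ = 0` (`yⱼ ∈ φ^j T`) kills everything except `φ^(m-1) yᵢ`, so the simple modules `φ^i T`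
(`i < m`) are independent. By semisimplicity there is `β : M → T` inverting `φ^(m-1)` on `T` and
vanishing on `φ^i T` for `i < m - 1`, and `π = ∑ φ^i β φ^(m-1-i)` is an idempotent commuting
with `φ` whose image is `⨁ φ^i T`. Indecomposability forces `π = 1`, so `φ^i s` is a one-block
base.
-/

open LinearMap (ker)

theorem commute_sum_pow_mul_mul_pow {A : Type*} [Ring A] {a : A} {m : ℕ} (ha : a ^ m = 0)
    (b : A) : Commute a (∑ i ∈ Finset.range m, a ^ i * b * a ^ (m - 1 - i)) := by
  cases m with
  | zero => simp
  | succ m =>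
    -- both products are `∑ i < m, a ^ (i + 1) * b * a ^ (m - i)` up to a vanishing term
    rw [Commute, SemiconjBy, Finset.mul_sum, Finset.sum_mul, Finset.sum_range_succ,
      Finset.sum_range_succ']
    simp only [Nat.add_sub_cancel, Nat.sub_zero, Nat.sub_self, pow_zero, mul_one, one_mul]
    have hfirst : a * (a ^ m * b) = 0 := by rw [← mul_assoc, ← pow_succ', ha, zero_mul]
    have hlast : b * a ^ m * a = 0 := by rw [mul_assoc, ← pow_succ, ha, mul_zero]
    rw [hfirst, hlast]
    refine congrArg (· + 0) (Finset.sum_congr rfl fun i hi => ?_)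
    have hi : m - (i + 1) + 1 = m - i := by have := Finset.mem_range.mp hi; omega
    rw [mul_assoc _ _ a, ← pow_succ, hi, pow_succ']
    simp only [mul_assoc]

section SimpleModules

variable {R M N : Type*} [Ring R] [AddCommGroup M] [Module R M] [AddCommGroup N] [Module R N]

theorem isAtom_map_of_disjoint_ker {T : Submodule R M} (hT : IsAtom T) {f : M →ₗ[R] N}
    (hf : Disjoint T (ker f)) : IsAtom (T.map f) := by
  rw [← isSimpleModule_iff_isAtom] at hT ⊢
  rw [← LinearMap.range_domRestrict]
  exact IsSimpleModule.congr
    (LinearEquiv.ofInjective _ (LinearMap.injective_domRestrict_iff.mpr hf)).symm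

variable [IsSemisimpleModule R M]

theorem IsSemisimpleModule.exists_isAtom_span_singleton_apply_ne_zero {f : M →ₗ[R] N}
    (hf : f ≠ 0) : ∃ s, IsAtom (Submodule.span R {s}) ∧ f s ≠ 0 := by
  obtain ⟨A, hA, hAf⟩ : ∃ A : Submodule R M, IsAtom A ∧ ¬A ≤ ker f := by
    by_contra! h
    exact hf (LinearMap.ker_eq_top.mp (eq_top_iff.mpr (sSup_atoms_eq_top.ge.trans (sSup_le h))))
  obtain ⟨s, hsA, hs⟩ := SetLike.not_le_iff_exists.mp hAf
  have hs0 : s ≠ 0 := by rintro rfl; exact hs (Submodule.zero_mem _)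
  refine ⟨s, ?_, hs⟩
  rwa [(hA.le_iff_eq (by simpa using hs0)).mp ((Submodule.span_singleton_le_iff_mem _ _).mpr hsA)]

theorem IsSemisimpleModule.exists_leftInverse_of_disjoint {f : N →ₗ[R] M}
    (hf : Function.Injective f) {W : Submodule R M} (hW : Disjoint (LinearMap.range f) W) :
    ∃ g : M →ₗ[R] N, g ∘ₗ f = LinearMap.id ∧ W ≤ ker g := by
  obtain ⟨W', hWW', hc⟩ := hW.symm.exists_isCompl
  refine ⟨LinearMap.linearProjOfIsCompl W' f hf hc.symm, by ext; simp, ?_⟩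
  rwa [LinearMap.ker_linearProjOfIsCompl]

end SimpleModules

namespace Module.End

section Chain

variable {R M : Type*} [Ring R] [AddCommGroup M] [Module R M] {φ : Module.End R M}
  {T : Submodule R M} {m : ℕ}

theorem pow_apply_eq_zero_of_le {t : M} (ht : (φ ^ m) t = 0) {i : ℕ} (hi : m ≤ i) :
    (φ ^ i) t = 0 := by
  rw [← pow_sub_mul_pow φ hi, Module.End.mul_apply, ht, map_zero]

theorem eq_zero_of_apply_sum_eq_zero (hT : T ≤ ker (φ ^ m))
    (hinj : Disjoint T (ker (φ ^ (m - 1)))) {s : Finset ℕ} {v : ℕ → M}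
    (hv : ∀ i ∈ s, v i ∈ T.map (φ ^ i)) (hsum : φ (∑ j ∈ s, v j) = 0) {i : ℕ} (hi : i ∈ s)
    (hne : i ≠ m - 1) : v i = 0 := by
  induction i using Nat.strong_induction_on with
  | _ i ih =>
    obtain ⟨t, ht, hvi⟩ := hv i hi
    rw [← hvi]
    rcases le_or_gt m i with hmi | him
    · exact pow_apply_eq_zero_of_le (hT ht) hmi
    -- apply `φ ^ (m - 1 - i)` to the sum: the terms `j < i` vanish by induction,
    -- the terms `j > i` because they land in `T.map (φ ^ m) = 0`
    suffices (φ ^ (m - 1)) t = 0 by rw [LinearMap.disjoint_ker.mp hinj t ht this, map_zero]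
    calc (φ ^ (m - 1)) t = (φ ^ (m - 1 - i)) (∑ j ∈ s, v j) := by
          rw [map_sum, Finset.sum_eq_single_of_mem i hi]
          · rw [← hvi, ← Module.End.mul_apply, ← pow_add, Nat.sub_add_cancel (by omega)]
          intro j hj hji
          rcases lt_or_gt_of_ne hji with hlt | hgt
          · rw [ih j hlt hj (by omega), map_zero]
          · obtain ⟨t', ht', hv'⟩ := hv j hj
            rw [← hv', ← Module.End.mul_apply, ← pow_add]
            exact pow_apply_eq_zero_of_le (hT ht') (by omega)
      _ = (φ ^ (m - 2 - i)) (φ (∑ j ∈ s, v j)) := by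
          rw [← Module.End.mul_apply, ← pow_succ]
          congr 3
          omega
      _ = 0 := by rw [hsum, map_zero]

theorem iSupIndep_map_pow (hT : T ≤ ker (φ ^ m)) (hinj : Disjoint T (ker (φ ^ (m - 1)))) :
    iSupIndep fun i => T.map (φ ^ i) := by
  rw [iSupIndep_iff_finsetSum_eq_zero_imp_eq_zero]
  intro s v hv hsum i hi
  have hsingle : ∀ j ∈ s, j ≠ m - 1 → v j = 0 := fun j hj =>
    eq_zero_of_apply_sum_eq_zero hT hinj hv (by rw [hsum, map_zero]) hj
  obtain rfl | hne := eq_or_ne i (m - 1)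
  · rwa [← Finset.sum_eq_single_of_mem _ hi hsingle]
  · exact hsingle i hi hne

theorem ker_inf_iSup_map_pow_le (hT : T ≤ ker (φ ^ m))
    (hinj : Disjoint T (ker (φ ^ (m - 1)))) :
    ker φ ⊓ ⨆ i, T.map (φ ^ i) ≤ T.map (φ ^ (m - 1)) := by
  rintro y ⟨hy, hyT⟩
  obtain ⟨s, hs⟩ := Submodule.mem_iSup_iff_exists_finset.mp hyT
  obtain ⟨v, rfl⟩ := (Submodule.mem_iSup_finset_iff_exists_sum _ _).mp hs
  refine Submodule.sum_mem _ fun j hj => ?_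
  obtain rfl | hne := eq_or_ne j (m - 1)
  · exact (v _).2
  · rw [eq_zero_of_apply_sum_eq_zero hT hinj (fun i _ => (v i).2) hy hj hne]
    exact Submodule.zero_mem _

end Chain

section Indecomposable

variable {R M : Type*} [Ring R] [AddCommGroup M] [Module R M] {φ : Module.End R M}

theorem eq_bot_of_disjoint_ker (hφ : IsNilpotent φ) {P : Submodule R M}
    (hP : ∀ p ∈ P, φ p ∈ P) (hdisj : Disjoint P (ker φ)) : P = ⊥ := by
  obtain ⟨N, hN⟩ := hφ
  have hpow : ∀ k, ∀ p ∈ P, (φ ^ k) p = 0 → p = 0 := by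
    intro k
    induction k with
    | zero => simp
    | succ k ih =>
      intro p hp h
      rw [pow_succ, Module.End.mul_apply] at h
      exact LinearMap.disjoint_ker.mp hdisj p hp (ih (φ p) (hP p hp) h)
  exact eq_bot_iff.mpr fun p hp => (Submodule.mem_bot R).mpr (hpow N p hp (by simp [hN]))

theorem ker_le_of_isAtom_ker (hφ : IsNilpotent φ) (hker : IsAtom (ker φ))
    {P : Submodule R M} (hP : ∀ p ∈ P, φ p ∈ P) (hP0 : P ≠ ⊥) : ker φ ≤ P :=
  hker.not_disjoint_iff_le.mp fun h => hP0 (eq_bot_of_disjoint_ker hφ hP h.symm)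

theorem not_exists_idempotent_of_isAtom_ker (hφ : IsNilpotent φ)
    (hker : IsAtom (ker φ)) :
    ¬∃ e : Module.End R M, IsIdempotentElem e ∧ e ≠ 0 ∧ e ≠ 1 ∧ e * φ = φ * e := by
  rintro ⟨e, he, he0, he1, hcomm⟩
  have hcompl := LinearMap.IsIdempotentElem.isCompl he
  have hcomm' (y : M) : e (φ y) = φ (e y) := LinearMap.congr_fun hcomm y
  have hrange : ker φ ≤ LinearMap.range e := by
    refine ker_le_of_isAtom_ker hφ hker ?_ (by rwa [Ne, LinearMap.range_eq_bot])
    rintro _ ⟨y, rfl⟩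
    exact ⟨φ y, hcomm' y⟩
  have hkere : ker φ ≤ ker e := by
    refine ker_le_of_isAtom_ker hφ hker (fun p hp => ?_) fun h => he1 ?_
    · rw [LinearMap.mem_ker] at hp ⊢
      rw [hcomm', hp, map_zero]
    · have htop : LinearMap.range e = ⊤ := by simpa [h] using hcompl.codisjoint
      exact LinearMap.ext fun y =>
        (LinearMap.IsIdempotentElem.mem_range_iff he).mp (htop ▸ Submodule.mem_top)
  exact hker.ne_bot (le_bot_iff.mp (hcompl.disjoint hrange hkere))

end Indecomposable

section Projection

variable {R M : Type*} [Ring R] [AddCommGroup M] [Module R M] [IsSemisimpleModule R M]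
  {φ : Module.End R M} {T : Submodule R M} {m : ℕ}

theorem exists_retraction_pow_pred (hT : T ≤ ker (φ ^ m)) (hinj : Disjoint T (ker (φ ^ (m - 1)))) :
    ∃ β : Module.End R M, (∀ y, β y ∈ T) ∧ (∀ t ∈ T, β ((φ ^ (m - 1)) t) = t) ∧
      ∀ i < m - 1, ∀ t ∈ T, β ((φ ^ i) t) = 0 := by
  have hdisj : Disjoint (LinearMap.range ((φ ^ (m - 1)).domRestrict T))
      (⨆ i ∈ {i | i < m - 1}, T.map (φ ^ i)) := by
    rw [LinearMap.range_domRestrict]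
    exact (iSupIndep_map_pow hT hinj).disjoint_biSup (by simp)
  obtain ⟨g, hgf, hg⟩ := IsSemisimpleModule.exists_leftInverse_of_disjoint
    (LinearMap.injective_domRestrict_iff.mpr hinj) hdisj
  refine ⟨T.subtype ∘ₗ g, fun y => (g y).2, fun t ht => ?_, fun i hi t ht => ?_⟩
  · exact congrArg Subtype.val (LinearMap.congr_fun hgf ⟨t, ht⟩)
  · have : (φ ^ i) t ∈ ker g :=
      hg (Submodule.mem_iSup_of_mem i (Submodule.mem_iSup_of_mem hi (Submodule.mem_map_of_mem ht)))
    simp [LinearMap.mem_ker.mp this]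

theorem exists_commute_projection_iSup_map_pow (hφ : φ ^ m = 0)
    (hinj : Disjoint T (ker (φ ^ (m - 1)))) :
    ∃ π : Module.End R M, Commute φ π ∧ (∀ y, π y ∈ ⨆ i, T.map (φ ^ i)) ∧
      ∀ y ∈ ⨆ i, T.map (φ ^ i), π y = y := by
  obtain ⟨β, hβT, hβ_top, hβ_low⟩ := exists_retraction_pow_pred (by simp [hφ]) hinj
  set π := ∑ i ∈ Finset.range m, φ ^ i * β * φ ^ (m - 1 - i)
  have hπ (y : M) : π y = ∑ i ∈ Finset.range m, (φ ^ i) (β ((φ ^ (m - 1 - i)) y)) := by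
    simp [π, LinearMap.sum_apply]
  have hfix (j : ℕ) {t : M} (ht : t ∈ T) : π ((φ ^ j) t) = (φ ^ j) t := by
    rcases le_or_gt m j with hmj | hjm
    · simp [pow_eq_zero_of_le hmj hφ]
    rw [hπ, Finset.sum_eq_single_of_mem j (Finset.mem_range.mpr hjm)]
    · rw [← Module.End.mul_apply (φ ^ (m - 1 - j)), ← pow_add, Nat.sub_add_cancel (by omega),
        hβ_top t ht]
    intro i hi hij
    have := Finset.mem_range.mp hi
    rw [← Module.End.mul_apply (φ ^ (m - 1 - i)), ← pow_add]
    rcases lt_or_gt_of_ne hij with hlt | hgt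
    · simp [pow_eq_zero_of_le (show m ≤ m - 1 - i + j by omega) hφ]
    · rw [hβ_low _ (by omega) t ht, map_zero]
  refine ⟨π, commute_sum_pow_mul_mul_pow hφ β, fun y => ?_, fun y hy => ?_⟩
  · rw [hπ]
    exact Submodule.sum_mem _ fun i _ =>
      Submodule.mem_iSup_of_mem i (Submodule.mem_map_of_mem (hβT _))
  · have hle : (⨆ i, T.map (φ ^ i)) ≤ LinearMap.eqLocus π 1 :=
      iSup_le fun j => by
        rintro _ ⟨t, ht, rfl⟩
        exact hfix j ht
    exact hle hy

end Projection

end Module.End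

section JordanBase

open Module.End

variable {R M : Type*} [Ring R] [AddCommGroup M] [Module R M] {φ : Module.End R M}

theorem IsNilpotentJordanBase.apply_eq_pow_apply {Γ : Type*} {k : Γ → ℕ} {x : Γ → ℕ → M}
    (hb : IsNilpotentJordanBase φ k x) (γ : Γ) (i : ℕ) : x γ i = (φ ^ i) (x γ 0) := by
  induction i with
  | zero => rfl
  | succ i ih => rw [← hb.step, ih, pow_succ', Module.End.mul_apply]

theorem IsNilpotentJordanBase.isAtom_ker {n : ℕ} {x : ℕ → M}
    (hb : IsNilpotentJordanBase φ (fun _ : Unit => n) (fun _ => x)) : IsAtom (ker φ) := by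
  have hn : 1 ≤ n := hb.k_pos ()
  have hatom (i : ℕ) (hi : i < n) : IsAtom (Submodule.span R {x i}) :=
    isSimpleModule_iff_isAtom.mp (hb.simple () i hi)
  set T := Submodule.span R {x 0}
  have hmap (i : ℕ) : Submodule.span R {x i} = T.map (φ ^ i) := by
    rw [Submodule.map_span, Set.image_singleton, ← hb.apply_eq_pow_apply ()]
  have hT : T ≤ ker (φ ^ n) := by
    rw [Submodule.span_singleton_le_iff_mem, LinearMap.mem_ker, ← hb.apply_eq_pow_apply (),
      hb.zero_after () n le_rfl]
  have hinj : Disjoint T (ker (φ ^ (n - 1))) := by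
    refine (hatom 0 (by omega)).not_le_iff_disjoint.mp fun h => (hatom (n - 1) (by omega)).ne_bot ?_
    rw [Submodule.span_singleton_eq_bot, hb.apply_eq_pow_apply ()]
    exact h (Submodule.mem_span_singleton_self _)
  have htop : ⨆ i, T.map (φ ^ i) = ⊤ :=
    eq_top_iff.mpr (hb.spans.ge.trans (iSup_le fun p => le_iSup_of_le p.2.val (hmap _).le))
  have hker : ker φ = Submodule.span R {x (n - 1)} := by
    refine le_antisymm ?_ ?_
    · simpa [htop, hmap] using ker_inf_iSup_map_pow_le hT hinj
    · rw [Submodule.span_singleton_le_iff_mem, LinearMap.mem_ker, hb.step (),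
        hb.zero_after () _ (by omega)]
  exact hker ▸ hatom (n - 1) (by omega)

theorem isNilpotentJordanBase_of_iSup_map_pow_eq_top {s : M} {m : ℕ} (hm : 1 ≤ m)
    (hs : IsAtom (Submodule.span R {s})) (hzero : (φ ^ m) s = 0)
    (hinj : Disjoint (Submodule.span R {s}) (ker (φ ^ (m - 1))))
    (htop : ⨆ i, (Submodule.span R {s}).map (φ ^ i) = ⊤) :
    IsNilpotentJordanBase φ (fun _ : Unit => m) (fun _ i => (φ ^ i) s) := by
  have hmap (i : ℕ) : Submodule.span R {(φ ^ i) s} = (Submodule.span R {s}).map (φ ^ i) := by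
    rw [Submodule.map_span, Set.image_singleton]
  have hT : Submodule.span R {s} ≤ ker (φ ^ m) := by
    rwa [Submodule.span_singleton_le_iff_mem, LinearMap.mem_ker]
  refine
    { k_pos := fun _ => hm
      simple := fun _ i hi => ?_
      indep := ?_
      spans := ?_
      step := fun _ i => by rw [pow_succ', Module.End.mul_apply]
      zero_after := fun _ i hi => pow_apply_eq_zero_of_le hzero hi
      bounded := ⟨m, fun _ => le_rfl⟩ }
  · rw [hmap, isSimpleModule_iff_isAtom]
    refine isAtom_map_of_disjoint_ker hs (hinj.mono_right ?_)
    rw [← pow_sub_mul_pow φ (show i ≤ m - 1 by omega), Module.End.mul_eq_comp]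
    exact LinearMap.ker_le_ker_comp _ _
  · simp_rw [hmap]
    exact (iSupIndep_map_pow hT hinj).comp (f := fun p : Σ _ : Unit, Fin m => (p.2 : ℕ))
      fun p q h => by cases p; cases q; simp_all [Fin.ext_iff]
  · refine eq_top_iff.mpr (htop.ge.trans (iSup_le fun i => ?_))
    rcases lt_or_ge i m with hi | hi
    · exact le_iSup_of_le ⟨(), i, hi⟩ (hmap i).ge
    · rw [← hmap, pow_apply_eq_zero_of_le hzero hi, Submodule.span_zero_singleton]
      exact bot_le

theorem exists_isNilpotentJordanBase_of_indecomposable [IsSemisimpleModule R M] (hφ0 : φ ≠ 0)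
    (hφ : IsNilpotent φ)
    (hind : ¬∃ e : Module.End R M, IsIdempotentElem e ∧ e ≠ 0 ∧ e ≠ 1 ∧ e * φ = φ * e) :
    ∃ (n : ℕ) (x : ℕ → M), IsNilpotentJordanBase φ (fun _ : Unit => n) (fun _ => x) := by
  have : Nontrivial (Module.End R M) := nontrivial_of_ne φ 0 hφ0
  set m := nilpotencyClass φ
  have hm : φ ^ m = 0 := pow_nilpotencyClass hφ
  obtain ⟨s, hs, hs'⟩ :=
    IsSemisimpleModule.exists_isAtom_span_singleton_apply_ne_zero (pow_pred_nilpotencyClass hφ)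
  have hinj : Disjoint (Submodule.span R {s}) (ker (φ ^ (m - 1))) :=
    hs.not_le_iff_disjoint.mp (by rwa [Submodule.span_singleton_le_iff_mem, LinearMap.mem_ker])
  obtain ⟨π, hcomm, hrange, hfix⟩ := exists_commute_projection_iSup_map_pow hm hinj
  have hπs : π s = s :=
    hfix s (Submodule.mem_iSup_of_mem 0 (by simp [Submodule.mem_span_singleton_self]))
  have hπ : π = 1 := by
    by_contra hπ1
    refine hind ⟨π, LinearMap.ext fun y => hfix _ (hrange y), fun h => hs.ne_bot ?_, hπ1,
      hcomm.eq.symm⟩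
    rw [Submodule.span_singleton_eq_bot, ← hπs, h, LinearMap.zero_apply]
  refine ⟨m, _, isNilpotentJordanBase_of_iSup_map_pow_eq_top
    (pos_nilpotencyClass_iff.mpr hφ) hs (by simp [hm]) hinj (eq_top_iff.mpr fun y _ => ?_)⟩
  simpa [hπ] using hrange y

end JordanBase

/-- For a nonzero nilpotent endomorphism `φ` of a semisimple module `M`: `M` admits a nilpotent
Jordan normal base with respect to `φ` consisting of one block iff `φ` is an indecomposable
nilpotent element of `Hom_R(M,M)`, i.e. no idempotent `e` with `0 ≠ e ≠ 1` commutes with `φ`. -/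
theorem stmt_5 {R : Type*} [Ring R] {M : Type*} [AddCommGroup M] [Module R M]
    [IsSemisimpleModule R M] (φ : Module.End R M) (hφ0 : φ ≠ 0) (hφ : IsNilpotent φ) :
    (∃ (n : ℕ) (x : ℕ → M), IsNilpotentJordanBase φ (fun _ : Unit => n) (fun _ => x)) ↔
      ¬∃ e : Module.End R M, IsIdempotentElem e ∧ e ≠ 0 ∧ e ≠ 1 ∧ e * φ = φ * e :=
  ⟨fun ⟨_, _, hb⟩ => Module.End.not_exists_idempotent_of_isAtom_ker hφ hb.isAtom_ker,
    exists_isNilpotentJordanBase_of_indecomposable hφ0 hφ⟩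
end

section
/- Let D be a division ring finite-dimensional over its center K = Z(D), and let φ be a nilpotent D-linear endomorphism of a finite-dimensional left D-vector space M. Then C_φ is a K-subspace of Hom_D(M,M) and dim_K(C_φ) ≤ dim_K(D) · dim_D(ker φ) · dim_D(M). -/
/-!
Choose `k = dim_D (ker φ)` vectors `v₁, …, v_k` spanning a complement of `im φ`. If a
`φ`-invariant subspace `N` satisfies `N + im φ = M`, then applying `φ` repeatedly gives
`N + im φ^j = M` for every `j`, so `N = M` by nilpotency; hence the vectors `φ^j vₗ` span `M`.
An endomorphism commuting with `φ` is therefore determined by the values `ψ vₗ`, so `C_φ`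
embeds `K`-linearly into `M^k`, whose `K`-dimension is `k · dim_K D · dim_D M`.
-/

namespace Module.End

section Semiring

variable {R M : Type*} [Semiring R] [AddCommMonoid M] [Module R M]

theorem eq_top_of_sup_range_eq_top {φ : Module.End R M} (hφ : IsNilpotent φ)
    {N : Submodule R M} (hN : N.map φ ≤ N) (h : N ⊔ LinearMap.range φ = ⊤) : N = ⊤ := by
  have step : ∀ j, N ⊔ LinearMap.range (φ ^ j) = ⊤ := by
    intro j
    induction j with
    | zero => simp [Module.End.one_eq_id]
    | succ j ih =>
      refine eq_top_iff.2 (h.symm.le.trans (sup_le le_sup_left ?_))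
      calc LinearMap.range φ = (N ⊔ LinearMap.range (φ ^ j)).map φ := by
            rw [ih, Submodule.map_top]
        _ = N.map φ ⊔ LinearMap.range (φ ^ (j + 1)) := by
            rw [Submodule.map_sup, pow_succ', Module.End.mul_eq_comp, LinearMap.range_comp]
        _ ≤ N ⊔ LinearMap.range (φ ^ (j + 1)) := sup_le_sup_right hN _
  obtain ⟨n, hn⟩ := hφ
  simpa [hn] using step n

theorem span_pow_apply_eq_top {φ : Module.End R M} (hφ : IsNilpotent φ) {ι : Type*}
    {v : ι → M}
    (hv : Submodule.span R (Set.range v) ⊔ LinearMap.range φ = ⊤) :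
    Submodule.span R (Set.range fun p : ι × ℕ => (φ ^ p.2) (v p.1)) = ⊤ := by
  refine eq_top_of_sup_range_eq_top hφ ?_
    (eq_top_iff.2 (hv.symm.le.trans (sup_le_sup_right ?_ _)))
  · rw [Submodule.map_span_le]
    rintro _ ⟨⟨l, j⟩, rfl⟩
    exact Submodule.subset_span ⟨(l, j + 1), by simp [pow_succ']⟩
  · exact Submodule.span_mono (Set.range_subset_iff.2 fun l => ⟨(l, 0), by simp⟩)

theorem eq_zero_of_commute_of_apply_eq_zero {φ ψ : Module.End R M} {ι : Type*} {v : ι → M}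
    (hv : Submodule.span R (Set.range fun p : ι × ℕ => (φ ^ p.2) (v p.1)) = ⊤)
    (hψφ : Commute ψ φ) (hψv : ∀ l, ψ (v l) = 0) : ψ = 0 := by
  refine LinearMap.ext_on_range hv ?_
  rintro ⟨l, j⟩
  rw [← Module.End.mul_apply, (hψφ.pow_right j).eq, Module.End.mul_apply, hψv]
  simp

end Semiring

theorem exists_span_sup_range_eq_top {D M : Type*} [DivisionRing D] [AddCommGroup M]
    [Module D M] [FiniteDimensional D M] (φ : Module.End D M) :
    ∃ v : Fin (Module.finrank D (LinearMap.ker φ)) → M,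
      Submodule.span D (Set.range v) ⊔ LinearMap.range φ = ⊤ := by
  obtain ⟨C, hC⟩ := (LinearMap.range φ).exists_isCompl
  have hdim : Module.finrank D C = Module.finrank D (LinearMap.ker φ) := by
    have := Submodule.finrank_add_eq_of_isCompl hC
    have := LinearMap.finrank_range_add_finrank_ker φ
    omega
  let b := (Module.finBasis D C).reindex (finCongr hdim)
  refine ⟨C.subtype ∘ b, ?_⟩
  rw [Set.range_comp, Submodule.span_image, b.span_eq, Submodule.map_subtype_top]
  exact hC.symm.sup_eq_top

end Module.End

theorem Subalgebra.finrank_centralizer_singleton_le {K R M : Type*} [Field K] [Semiring R]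
    [AddCommGroup M] [Module R M] [Module K M] [SMul K R] [IsScalarTower K R M]
    [SMulCommClass R K M] [FiniteDimensional K M] {φ : Module.End R M} {ι : Type*} [Fintype ι]
    {v : ι → M}
    (hv : Submodule.span R (Set.range fun p : ι × ℕ => (φ ^ p.2) (v p.1)) = ⊤) :
    Module.finrank K (Subalgebra.centralizer K {φ}) ≤ Fintype.card ι * Module.finrank K M := by
  let eval : Subalgebra.centralizer K {φ} →ₗ[K] ι → M :=
    (LinearMap.pi fun l => LinearMap.applyₗ' K (v l)) ∘ₗ
      (Subalgebra.centralizer K {φ}).toSubmodule.subtype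
  have heval : Function.Injective eval := by
    refine (injective_iff_map_eq_zero eval).2 fun ψ hψ => Subtype.ext ?_
    refine Module.End.eq_zero_of_commute_of_apply_eq_zero hv ?_ (congrFun hψ)
    exact ((Subalgebra.mem_centralizer_iff K).1 ψ.2 φ rfl).symm
  simpa [Module.finrank_pi_fintype] using LinearMap.finrank_le_finrank_of_injective heval

/-- If `D` is a division ring finite-dimensional over its center `K = Z(D)` and `φ` is a
nilpotent `D`-linear endomorphism of a finite-dimensional left `D`-vector space `M`, then the
centralizer `C_φ` (a `K`-subalgebra, hence `K`-subspace, of `Hom_D(M,M)`) satisfies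
`dim_K C_φ ≤ dim_K D · dim_D (ker φ) · dim_D M`. -/
theorem stmt_15 {D : Type*} [DivisionRing D] [FiniteDimensional (Subring.center D) D]
    {M : Type*} [AddCommGroup M] [Module D M] [FiniteDimensional D M]
    (φ : Module.End D M) (hφ : IsNilpotent φ) :
    Module.finrank (Subring.center D)
        ↥(Subalgebra.centralizer (Subring.center D) ({φ} : Set (Module.End D M))) ≤
      Module.finrank (Subring.center D) D * Module.finrank D ↥(LinearMap.ker φ) *
        Module.finrank D M := by
  have : FiniteDimensional (Subring.center D) M := Module.Finite.trans D M
  obtain ⟨v, hv⟩ := φ.exists_span_sup_range_eq_top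
  calc _ ≤ Module.finrank D (LinearMap.ker φ) * Module.finrank (Subring.center D) M := by
        simpa using Subalgebra.finrank_centralizer_singleton_le (K := Subring.center D)
          (φ.span_pow_apply_eq_top hφ hv)
    _ = _ := by rw [← Module.finrank_mul_finrank (Subring.center D) D M]; ring
end

section
/- Let φ be an R-endomorphism of a left R-module M and r ≥ 1 an integer such that M = ker(φʳ) ⊕ im(φʳ). Then the map σ ↦ (σ restricted to ker(φʳ), σ restricted to im(φʳ)) defines a Z(R)-algebra isomorphism C_φ ≅ C_{φ₁} × C_{φ₂}, where φ₁ and φ₂ are the restrictions of φ to ker(φʳ) and im(φʳ) respectively. -/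
/-!
An endomorphism commuting with `φ` commutes with `φʳ`, so it preserves `ker (φʳ)` and `im (φʳ)`,
and restricting to both summands is an algebra map into the product of centralizers. It is
injective because the two summands span `M`, and surjective because a pair `(τ₁, τ₂)` commuting
with `φ₁` and `φ₂` glues along `M = ker (φʳ) ⊕ im (φʳ)` to an endomorphism commuting with `φ`.
-/

open Module LinearMap

theorem Subalgebra.mem_centralizer_singleton_iff {S A : Type*} [CommSemiring S] [Semiring A]
    [Algebra S A] {a b : A} : b ∈ centralizer S {a} ↔ Commute a b := by
  simp [mem_centralizer_iff, Commute, SemiconjBy]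

namespace Module.End

variable {R M : Type*} [Ring R] [AddCommGroup M] [Module R M]

theorem mapsTo_ker_of_commute {φ σ : End R M} (h : Commute φ σ) :
    Set.MapsTo σ (ker φ) (ker φ) := fun x hx => by
  rw [SetLike.mem_coe, mem_ker] at hx ⊢
  rw [← mul_apply, h.eq, mul_apply, hx, map_zero]

theorem mapsTo_range_of_commute {φ σ : End R M} (h : Commute φ σ) :
    Set.MapsTo σ (LinearMap.range φ) (LinearMap.range φ) := by
  rintro _ ⟨x, rfl⟩
  exact ⟨σ x, congr($h.eq x)⟩

variable {φ : End R M} {p q : Submodule R M} {φ₁ : End R p} {φ₂ : End R q}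

theorem restrict_mem_centralizer (hφ₁ : ∀ u : p, (φ₁ u : M) = φ u) {σ : End R M}
    (hσ : Commute φ σ) (hp : Set.MapsTo σ p p) :
    σ.restrict hp ∈ Subalgebra.centralizer (Subring.center R) {φ₁} := by
  rw [Subalgebra.mem_centralizer_singleton_iff]
  ext u
  change (φ₁ (σ.restrict hp u) : M) = σ (φ₁ u)
  rw [hφ₁, hφ₁]
  exact congr($hσ.eq u)

def centralizerRestrict (hφ₁ : ∀ u : p, (φ₁ u : M) = φ u)
    (hp : ∀ σ : End R M, Commute φ σ → Set.MapsTo σ p p) :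
    Subalgebra.centralizer (Subring.center R) {φ} →ₐ[Subring.center R]
      Subalgebra.centralizer (Subring.center R) {φ₁} where
  toFun σ :=
    have hσ := Subalgebra.mem_centralizer_singleton_iff.1 σ.2
    ⟨σ.1.restrict (hp σ hσ), restrict_mem_centralizer hφ₁ hσ (hp σ hσ)⟩
  map_one' := rfl
  map_mul' _ _ := rfl
  map_zero' := rfl
  map_add' _ _ := rfl
  commutes' _ := rfl

theorem ofIsCompl_mem_centralizer (hpq : IsCompl p q) (hφ₁ : ∀ u : p, (φ₁ u : M) = φ u)
    (hφ₂ : ∀ v : q, (φ₂ v : M) = φ v) {τ₁ : End R p} {τ₂ : End R q} (h₁ : Commute φ₁ τ₁)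
    (h₂ : Commute φ₂ τ₂) :
    ofIsCompl hpq (p.subtype ∘ₗ τ₁) (q.subtype ∘ₗ τ₂) ∈
      Subalgebra.centralizer (Subring.center R) {φ} := by
  rw [Subalgebra.mem_centralizer_singleton_iff]
  refine ext_on_codisjoint hpq.codisjoint (fun u hu => ?_) (fun v hv => ?_)
  · lift u to p using hu
    simp only [mul_apply, ofIsCompl_apply_left, ← hφ₁, comp_apply, Submodule.subtype_apply]
    exact congr(($h₁.eq u : M))
  · lift v to q using hv
    simp only [mul_apply, ofIsCompl_apply_right, ← hφ₂, comp_apply, Submodule.subtype_apply]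
    exact congr(($h₂.eq v : M))

theorem centralizerRestrict_prod_bijective (hpq : IsCompl p q) (hφ₁ : ∀ u : p, (φ₁ u : M) = φ u)
    (hφ₂ : ∀ v : q, (φ₂ v : M) = φ v) (hp : ∀ σ : End R M, Commute φ σ → Set.MapsTo σ p p)
    (hq : ∀ σ : End R M, Commute φ σ → Set.MapsTo σ q q) :
    Function.Bijective ((centralizerRestrict hφ₁ hp).prod (centralizerRestrict hφ₂ hq)) := by
  refine ⟨fun σ τ h => Subtype.ext <|
    ext_on_codisjoint hpq.codisjoint (fun u hu => ?_) (fun v hv => ?_), fun ⟨τ₁, τ₂⟩ => ?_⟩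
  · lift u to p using hu
    exact congr(((($h).1 : End R p) u : M))
  · lift v to q using hv
    exact congr(((($h).2 : End R q) v : M))
  · have h₁ := Subalgebra.mem_centralizer_singleton_iff.1 τ₁.2
    have h₂ := Subalgebra.mem_centralizer_singleton_iff.1 τ₂.2
    refine ⟨⟨_, ofIsCompl_mem_centralizer hpq hφ₁ hφ₂ h₁ h₂⟩, Prod.ext ?_ ?_⟩
    · exact Subtype.ext <| LinearMap.ext fun u => Subtype.ext <| ofIsCompl_apply_left hpq u
    · exact Subtype.ext <| LinearMap.ext fun v => Subtype.ext <| ofIsCompl_apply_right hpq v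

noncomputable def centralizerEquivProd (hpq : IsCompl p q) (hφ₁ : ∀ u : p, (φ₁ u : M) = φ u)
    (hφ₂ : ∀ v : q, (φ₂ v : M) = φ v) (hp : ∀ σ : End R M, Commute φ σ → Set.MapsTo σ p p)
    (hq : ∀ σ : End R M, Commute φ σ → Set.MapsTo σ q q) :
    Subalgebra.centralizer (Subring.center R) {φ} ≃ₐ[Subring.center R]
      Subalgebra.centralizer (Subring.center R) {φ₁} ×
        Subalgebra.centralizer (Subring.center R) {φ₂} :=
  AlgEquiv.ofBijective _ (centralizerRestrict_prod_bijective hpq hφ₁ hφ₂ hp hq)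

end Module.End

theorem stmt_17_general {R : Type*} [Ring R] {M : Type*} [AddCommGroup M] [Module R M]
    (φ : Module.End R M) (r : ℕ)
    (hcompl : IsCompl (LinearMap.ker (φ ^ r)) (LinearMap.range (φ ^ r)))
    (φ₁ : Module.End R ↥(LinearMap.ker (φ ^ r)))
    (hφ₁ : ∀ u : ↥(LinearMap.ker (φ ^ r)), (φ₁ u : M) = φ u)
    (φ₂ : Module.End R ↥(LinearMap.range (φ ^ r)))
    (hφ₂ : ∀ v : ↥(LinearMap.range (φ ^ r)), (φ₂ v : M) = φ v) :
    ∃ e : ↥(Subalgebra.centralizer (Subring.center R) ({φ} : Set (Module.End R M))) ≃ₐ[Subring.center R]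
        (↥(Subalgebra.centralizer (Subring.center R)
            ({φ₁} : Set (Module.End R ↥(LinearMap.ker (φ ^ r))))) ×
         ↥(Subalgebra.centralizer (Subring.center R)
            ({φ₂} : Set (Module.End R ↥(LinearMap.range (φ ^ r)))))),
      ∀ σ, (∀ u : ↥(LinearMap.ker (φ ^ r)), (((e σ).1 : Module.End R ↥(LinearMap.ker (φ ^ r))) u : M) = (σ : Module.End R M) u) ∧
           (∀ v : ↥(LinearMap.range (φ ^ r)), (((e σ).2 : Module.End R ↥(LinearMap.range (φ ^ r))) v : M) = (σ : Module.End R M) v) :=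
  ⟨Module.End.centralizerEquivProd hcompl hφ₁ hφ₂
      (fun _ h => Module.End.mapsTo_ker_of_commute (h.pow_left r))
      (fun _ h => Module.End.mapsTo_range_of_commute (h.pow_left r)),
    fun _ => ⟨fun _ => rfl, fun _ => rfl⟩⟩

/-- Fitting-type decomposition of the centralizer: if `M = ker(φʳ) ⊕ im(φʳ)`, then restriction
`σ ↦ (σ|_{ker(φʳ)}, σ|_{im(φʳ)})` is a `Z(R)`-algebra isomorphism `C_φ ≅ C_{φ₁} × C_{φ₂}`,
where `φ₁`, `φ₂` are the restrictions of `φ` to `ker(φʳ)` and `im(φʳ)`. -/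
theorem stmt_17 {R : Type*} [Ring R] {M : Type*} [AddCommGroup M] [Module R M]
    (φ : Module.End R M) (r : ℕ) (hr : 1 ≤ r)
    (hcompl : IsCompl (LinearMap.ker (φ ^ r)) (LinearMap.range (φ ^ r)))
    (φ₁ : Module.End R ↥(LinearMap.ker (φ ^ r)))
    (hφ₁ : ∀ u : ↥(LinearMap.ker (φ ^ r)), (φ₁ u : M) = φ u)
    (φ₂ : Module.End R ↥(LinearMap.range (φ ^ r)))
    (hφ₂ : ∀ v : ↥(LinearMap.range (φ ^ r)), (φ₂ v : M) = φ v) :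
    ∃ e : ↥(Subalgebra.centralizer (Subring.center R) ({φ} : Set (Module.End R M))) ≃ₐ[Subring.center R]
        (↥(Subalgebra.centralizer (Subring.center R)
            ({φ₁} : Set (Module.End R ↥(LinearMap.ker (φ ^ r))))) ×
         ↥(Subalgebra.centralizer (Subring.center R)
            ({φ₂} : Set (Module.End R ↥(LinearMap.range (φ ^ r)))))),
      ∀ σ, (∀ u : ↥(LinearMap.ker (φ ^ r)), (((e σ).1 : Module.End R ↥(LinearMap.ker (φ ^ r))) u : M) = (σ : Module.End R M) u) ∧
           (∀ v : ↥(LinearMap.range (φ ^ r)), (((e σ).2 : Module.End R ↥(LinearMap.range (φ ^ r))) v : M) = (σ : Module.End R M) v) :=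
  stmt_17_general φ r hcompl φ₁ hφ₁ φ₂ hφ₂
end
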